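/- Fix u, k, ω, σ > 0, and for λ > 0 define M(β; λ) := ½u²k [ sin(ωβ) exp(−½k²σ²(β + λ^{−1}(1 − e^{−λβ}))) − λ ∫₀^∞ exp(−λα − ½k²σ²(α + β + λ^{−1})) sin(ω(α+β)) sinh((k²σ²/(2λ)) e^{−λ(α+β)}) dα ]. Then ∫₀^∞ M(β; λ) dβ → ½u²kω / (k⁴σ⁴ + ω²) as λ → 0⁺. -/

import Mathlib

open MeasureTheory Real Set

/-- The paper's leading-order Stokes'-drift kernel `M(β)` for the elastic dumbbell,
with wave amplitude `u`, wavenumber `k`, frequency `ω`, noise strength `σ`,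
and spring constant `l` (the paper's `λ`). -/
noncomputable def stokesKernel (u k ω σ l β : ℝ) : ℝ :=
  (1 / 2) * u ^ 2 * k *
    (Real.sin (ω * β) *
        Real.exp (-(k ^ 2 * σ ^ 2 / 2) * (β + l⁻¹ * (1 - Real.exp (-(l * β))))) -
      l * ∫ α in Ioi (0 : ℝ),
        Real.exp (-(l * α) - k ^ 2 * σ ^ 2 / 2 * (α + β + l⁻¹)) * Real.sin (ω * (α + β)) *
          Real.sinh (k ^ 2 * σ ^ 2 / (2 * l) * Real.exp (-(l * (α + β)))))

/-!
Write `c = k²σ²/2`. As `λ → 0⁺`, `λ⁻¹ (1 - e^{-λβ}) → β` (a derivative at `0`), so the first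
term of `M` tends to `sin (ωβ) e^{-2cβ}`. In the `α`-integral the prefactor `e^{-c/λ}` absorbs
`sinh (c/λ · e^{-λ(α+β)}) ≤ e^{c/λ} / 2`, which bounds that integral by `e^{-cβ} / (2(λ + c))`;
hence `λ` times it tends to `0`. Both terms are bounded by `e^{-cβ}`, so dominated convergence
gives the limit `½u²k ∫₀^∞ e^{-k²σ²β} sin (ωβ) dβ = ½u²kω / (k⁴σ⁴ + ω²)`.
-/

open Filter Topology

theorem integral_exp_neg_mul_mul_sin_Ioi {a : ℝ} (ha : 0 < a) (b : ℝ) :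
    ∫ x in Ioi (0 : ℝ), exp (-(a * x)) * sin (b * x) = b / (a ^ 2 + b ^ 2) := by
  have hz : (-a + b * Complex.I).re < 0 := by simpa using ha
  have hre : ∀ x : ℝ, exp (-(a * x)) * sin (b * x) =
      (Complex.exp ((-a + b * Complex.I) * x)).im := by
    intro x
    simp [Complex.exp_im, neg_mul]
  simp_rw [hre, ← RCLike.im_to_complex]
  rw [integral_im (integrableOn_exp_mul_complex_Ioi hz 0), integral_exp_mul_complex_Ioi hz 0,
    RCLike.im_to_complex, Complex.ofReal_zero, mul_zero, Complex.exp_zero, neg_div, one_div,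
    Complex.neg_im, Complex.inv_im, ← Complex.ofReal_neg, Complex.normSq_add_mul_I]
  simp [neg_div]

theorem sinh_le_exp_div_two (x : ℝ) : sinh x ≤ exp x / 2 := by
  rw [sinh_eq]
  linarith [exp_pos (-x)]

theorem tendsto_inv_mul_one_sub_exp_neg_mul (β : ℝ) :
    Tendsto (fun l => l⁻¹ * (1 - exp (-(l * β)))) (𝓝[≠] 0) (𝓝 β) := by
  have hderiv : HasDerivAt (fun l => 1 - exp (-(l * β))) β 0 := by
    simpa using (((hasDerivAt_id (0 : ℝ)).mul_const β).neg.exp).const_sub 1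
  refine (hasDerivAt_iff_tendsto_slope.mp hderiv).congr fun l => ?_
  simp [slope_def_field, div_eq_inv_mul]

theorem inv_mul_one_sub_exp_neg_mul_nonneg {l β : ℝ} (hl : 0 < l) (hβ : 0 ≤ β) :
    0 ≤ l⁻¹ * (1 - exp (-(l * β))) :=
  mul_nonneg (inv_nonneg.mpr hl.le) (sub_nonneg.mpr (exp_le_one_iff.mpr (by nlinarith)))

/-- The `α`-integral in `stokesKernel`, with `c = k²σ²/2`. -/
noncomputable def stokesKernelSinhIntegral (c ω l β : ℝ) : ℝ :=
  ∫ α in Ioi (0 : ℝ), exp (-(l * α) - c * (α + β + l⁻¹)) * sin (ω * (α + β)) *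
    sinh (c / l * exp (-(l * (α + β))))

section SinhIntegral

variable {c l β : ℝ}

theorem norm_stokesKernelSinhIntegrand_le (ω : ℝ) (hc : 0 ≤ c) (hl : 0 < l) {α : ℝ}
    (hαβ : 0 ≤ α + β) :
    ‖exp (-(l * α) - c * (α + β + l⁻¹)) * sin (ω * (α + β)) *
        sinh (c / l * exp (-(l * (α + β))))‖ ≤ exp (-(c * β)) / 2 * exp (-(l + c) * α) := by
  set x := c / l * exp (-(l * (α + β)))
  have hx : 0 ≤ x := by positivity
  have hxle : x ≤ c * l⁻¹ := by
    rw [← div_eq_mul_inv]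
    exact mul_le_of_le_one_right (by positivity) (exp_le_one_iff.mpr (by nlinarith))
  calc ‖exp (-(l * α) - c * (α + β + l⁻¹)) * sin (ω * (α + β)) * sinh x‖
      = exp (-(l * α) - c * (α + β + l⁻¹)) * |sin (ω * (α + β))| * sinh x := by
        rw [norm_mul, norm_mul, norm_of_nonneg (exp_pos _).le,
          norm_of_nonneg (sinh_nonneg_iff.mpr hx), Real.norm_eq_abs]
    _ ≤ exp (-(l * α) - c * (α + β + l⁻¹)) * 1 * (exp x / 2) := by
        gcongr
        exacts [abs_sin_le_one _, sinh_le_exp_div_two x]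
    _ = exp (-(c * β) + -(l + c) * α + (x - c * l⁻¹)) / 2 := by
        rw [mul_one, ← mul_div_assoc, ← exp_add]
        ring_nf
    _ ≤ exp (-(c * β)) / 2 * exp (-(l + c) * α) := by
        rw [div_mul_eq_mul_div, ← exp_add]
        gcongr exp ?_ / 2
        linarith

theorem norm_stokesKernelSinhIntegral_le (ω : ℝ) (hc : 0 ≤ c) (hl : 0 < l) (hβ : 0 ≤ β) :
    ‖stokesKernelSinhIntegral c ω l β‖ ≤ exp (-(c * β)) / (2 * (l + c)) := by
  have hlc : 0 < l + c := by linarith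
  calc ‖stokesKernelSinhIntegral c ω l β‖
      ≤ ∫ α in Ioi (0 : ℝ), exp (-(c * β)) / 2 * exp (-(l + c) * α) := by
        refine norm_integral_le_of_norm_le ((exp_neg_integrableOn_Ioi 0 hlc).const_mul _) ?_
        filter_upwards [ae_restrict_mem measurableSet_Ioi] with α (hα : 0 < α)
        exact norm_stokesKernelSinhIntegrand_le ω hc hl (by linarith)
    _ = exp (-(c * β)) / (2 * (l + c)) := by
        rw [integral_const_mul, integral_exp_mul_Ioi (neg_lt_zero.mpr hlc)]
        field_simp
        simp

theorem tendsto_mul_stokesKernelSinhIntegral (ω : ℝ) (hc : 0 < c) (hβ : 0 ≤ β) :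
    Tendsto (fun l => l * stokesKernelSinhIntegral c ω l β) (𝓝[>] 0) (𝓝 0) := by
  refine squeeze_zero_norm' (a := fun l => l * (exp (-(c * β)) / (2 * (l + c)))) ?_ ?_
  · filter_upwards [self_mem_nhdsWithin] with l (hl : 0 < l)
    rw [norm_mul, norm_of_nonneg hl.le]
    gcongr
    exact norm_stokesKernelSinhIntegral_le ω hc.le hl hβ
  · refine tendsto_nhdsWithin_of_tendsto_nhds ?_
    have hcont : ContinuousAt (fun l => l * (exp (-(c * β)) / (2 * (l + c)))) 0 := by
      fun_prop (disch := positivity)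
    simpa using hcont.tendsto

theorem norm_mul_stokesKernelSinhIntegral_le (ω : ℝ) (hc : 0 ≤ c) (hl : 0 < l) (hβ : 0 ≤ β) :
    ‖l * stokesKernelSinhIntegral c ω l β‖ ≤ exp (-(c * β)) := by
  have hlc : 0 < l + c := by linarith
  calc ‖l * stokesKernelSinhIntegral c ω l β‖
      ≤ l * (exp (-(c * β)) / (2 * (l + c))) := by
        rw [norm_mul, norm_of_nonneg hl.le]
        gcongr
        exact norm_stokesKernelSinhIntegral_le ω hc hl hβ
    _ = exp (-(c * β)) * (l / (2 * (l + c))) := by ring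
    _ ≤ exp (-(c * β)) :=
        mul_le_of_le_one_right (exp_pos _).le ((div_le_one (by positivity)).mpr (by linarith))

end SinhIntegral

theorem stokesKernel_eq (u k ω σ l β : ℝ) :
    stokesKernel u k ω σ l β = (1 / 2) * u ^ 2 * k *
      (sin (ω * β) * exp (-(k ^ 2 * σ ^ 2 / 2) * (β + l⁻¹ * (1 - exp (-(l * β))))) -
        l * stokesKernelSinhIntegral (k ^ 2 * σ ^ 2 / 2) ω l β) := by
  simp only [stokesKernel, stokesKernelSinhIntegral, div_div]

theorem stronglyMeasurable_stokesKernel (u k ω σ l : ℝ) :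
    StronglyMeasurable (stokesKernel u k ω σ l) := by
  have hsinh : StronglyMeasurable (stokesKernelSinhIntegral (k ^ 2 * σ ^ 2 / 2) ω l) := by
    have hcont : Continuous (fun p : ℝ × ℝ =>
        exp (-(l * p.2) - k ^ 2 * σ ^ 2 / 2 * (p.2 + p.1 + l⁻¹)) * sin (ω * (p.2 + p.1)) *
          sinh (k ^ 2 * σ ^ 2 / 2 / l * exp (-(l * (p.2 + p.1))))) := by
      fun_prop
    exact hcont.stronglyMeasurable.integral_prod_right'
  simp_rw [funext (stokesKernel_eq u k ω σ l)]
  exact ((Continuous.stronglyMeasurable (by fun_prop)).sub (hsinh.const_mul l)).const_mul _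

theorem norm_stokesKernel_le (u ω σ : ℝ) {k l β : ℝ} (hk : 0 ≤ k) (hl : 0 < l) (hβ : 0 ≤ β) :
    ‖stokesKernel u k ω σ l β‖ ≤ u ^ 2 * k * exp (-(k ^ 2 * σ ^ 2 / 2 * β)) := by
  set c := k ^ 2 * σ ^ 2 / 2
  have hc : 0 ≤ c := by positivity
  have hlocal : ‖sin (ω * β) * exp (-c * (β + l⁻¹ * (1 - exp (-(l * β)))))‖ ≤ exp (-(c * β)) := by
    rw [norm_mul, norm_of_nonneg (exp_pos _).le, Real.norm_eq_abs]
    refine (mul_le_of_le_one_left (exp_pos _).le (abs_sin_le_one _)).trans (exp_le_exp.mpr ?_)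
    nlinarith [inv_mul_one_sub_exp_neg_mul_nonneg hl hβ]
  rw [stokesKernel_eq, norm_mul, norm_of_nonneg (by positivity)]
  calc 1 / 2 * u ^ 2 * k * ‖_‖ ≤ 1 / 2 * u ^ 2 * k * (exp (-(c * β)) + exp (-(c * β))) := by
        gcongr
        exact (norm_sub_le _ _).trans
          (add_le_add hlocal (norm_mul_stokesKernelSinhIntegral_le ω hc hl hβ))
    _ = u ^ 2 * k * exp (-(c * β)) := by ring

theorem tendsto_stokesKernel (u ω : ℝ) {k σ β : ℝ} (hk : k ≠ 0) (hσ : σ ≠ 0) (hβ : 0 ≤ β) :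
    Tendsto (fun l => stokesKernel u k ω σ l β) (𝓝[>] 0)
      (𝓝 ((1 / 2) * u ^ 2 * k * (sin (ω * β) * exp (-(k ^ 2 * σ ^ 2 * β))))) := by
  have hc : 0 < k ^ 2 * σ ^ 2 / 2 := by positivity
  have hlocal : Tendsto (fun l => sin (ω * β) *
      exp (-(k ^ 2 * σ ^ 2 / 2) * (β + l⁻¹ * (1 - exp (-(l * β))))))
      (𝓝[>] 0) (𝓝 (sin (ω * β) * exp (-(k ^ 2 * σ ^ 2 / 2) * (β + β)))) :=
    ((tendsto_inv_mul_one_sub_exp_neg_mul β).mono_left (nhdsGT_le_nhdsNE 0)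
      |>.const_add β |>.const_mul _ |>.rexp).const_mul _
  have hlim := ((hlocal.sub (tendsto_mul_stokesKernelSinhIntegral ω hc hβ)).const_mul
    ((1 / 2) * u ^ 2 * k))
  simp_rw [← stokesKernel_eq] at hlim
  convert hlim using 3
  ring_nf

theorem stokesDrift_tendsto_weak_spring_general (u k ω σ : ℝ)
    (hk : 0 < k) (hσ : 0 < σ) :
    Filter.Tendsto (fun l : ℝ => ∫ β in Ioi (0 : ℝ), stokesKernel u k ω σ l β)
      (nhdsWithin 0 (Ioi 0))
      (nhds ((1 / 2) * u ^ 2 * k * ω / (k ^ 4 * σ ^ 4 + ω ^ 2))) := by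
  have hlimit : ∫ β in Ioi (0 : ℝ),
      (1 / 2) * u ^ 2 * k * (sin (ω * β) * exp (-(k ^ 2 * σ ^ 2 * β)))
      = (1 / 2) * u ^ 2 * k * ω / (k ^ 4 * σ ^ 4 + ω ^ 2) := by
    simp_rw [integral_const_mul, mul_comm (sin _),
      integral_exp_neg_mul_mul_sin_Ioi (by positivity : 0 < k ^ 2 * σ ^ 2)]
    ring
  rw [← hlimit]
  refine tendsto_integral_filter_of_dominated_convergence
    (fun β => u ^ 2 * k * exp (-(k ^ 2 * σ ^ 2 / 2 * β)))
    (.of_forall fun l => (stronglyMeasurable_stokesKernel u k ω σ l).aestronglyMeasurable) ?_ ?_ ?_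
  · filter_upwards [self_mem_nhdsWithin] with l (hl : 0 < l)
    filter_upwards [ae_restrict_mem measurableSet_Ioi] with β (hβ : 0 < β)
    exact norm_stokesKernel_le u ω σ hk.le hl hβ.le
  · simpa only [neg_mul] using (exp_neg_integrableOn_Ioi 0 (by positivity)).const_mul (u ^ 2 * k)
  · filter_upwards [ae_restrict_mem measurableSet_Ioi] with β (hβ : 0 < β)
    exact tendsto_stokesKernel u ω hk.ne' hσ.ne' hβ.le

/-- Weak-spring asymptotics of the leading-order Stokes' drift of the elastic
dumbbell: the drift integral tends to the weak-spring value as the spring constant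
tends to zero from above. -/
theorem stokesDrift_tendsto_weak_spring (u k ω σ : ℝ)
    (hu : 0 < u) (hk : 0 < k) (hω : 0 < ω) (hσ : 0 < σ) :
    Filter.Tendsto (fun l : ℝ => ∫ β in Ioi (0 : ℝ), stokesKernel u k ω σ l β)
      (nhdsWithin 0 (Ioi 0))
      (nhds ((1 / 2) * u ^ 2 * k * ω / (k ^ 4 * σ ^ 4 + ω ^ 2))) :=
  stokesDrift_tendsto_weak_spring_general u k ω σ hk hσ
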